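/- Let |φ_PX⟩ := (i|0⟩ + |1⟩)/√2 ∈ ℂ², and define the orthogonal projections Π₀ := |00⟩⟨00| + |11⟩⟨11| and Π₁ := |01⟩⟨01| + |10⟩⟨10| on ℂ² ⊗ ℂ² (the two outcomes of the XOR measurement Γ₁). For every r, h ∈ {0,1} there exists a complex number γ_{r,h} with |γ_{r,h}| = 1/2, not depending on ψ, such that for every ψ ∈ ℂ²: ((X Z^{r⊕h}) ⊗ (H|h⟩⟨h|H)) ∘ Π_r ((T X ψ) ⊗ φ_PX) = γ_{r,h} · (Tψ) ⊗ (H|h⟩). In particular, measuring Γ₁, then measuring the second wire in the Hadamard basis with outcome h, and applying the correction Z^{r⊕h} followed by X to the first wire leaves the first wire in the state Tψ (up to a global phase), each branch occurring with probability 1/4 for unit ψ. -/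

import Mathlib

/-!
The `c = 1` branch of Claim 3.5 of "Quantum State Obfuscation from Classical Oracles":
measuring `Γ₁` on `(T X ψ) ⊗ φ_PX` with outcome `r`, measuring the second wire in the
Hadamard basis with outcome `h`, and applying the correction `Z^{r⊕h}` followed by `X`
to the first wire leaves the first wire in the state `Tψ`, up to a global phase
`γ_{r,h}` of modulus `1/2`.
-/

open scoped BigOperators ComplexConjugate

noncomputable section

attribute [local instance] Classical.propDecidable

/-- The single-qubit space `ℂ²`, with orthonormal basis indexed by `{0,1}`. -/
abbrev Q1 : Type := EuclideanSpace ℂ (ZMod 2)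

/-- The two-qubit space `ℂ² ⊗ ℂ²`. -/
abbrev Q2 : Type := EuclideanSpace ℂ (ZMod 2 × ZMod 2)

/-- The three-qubit space `ℂ² ⊗ ℂ² ⊗ ℂ²`. -/
abbrev Q3 : Type := EuclideanSpace ℂ (ZMod 2 × ZMod 2 × ZMod 2)

/-- The ±1 lift of a bit: `+1` if `b = 0` and `−1` if `b = 1`. -/
def sgn (b : ZMod 2) : ℂ := if b = 0 then 1 else -1

/-- The standard basis state `|b⟩`. -/
def ket (b : ZMod 2) : Q1 := WithLp.toLp 2 (fun v => if v = b then 1 else 0)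

/-- The Hadamard basis state `H|x⟩ = (|0⟩ + (−1)^x |1⟩)/√2`. -/
def hadKet (x : ZMod 2) : Q1 := WithLp.toLp 2 (fun v => sgn (x * v) / (Real.sqrt 2 : ℂ))

/-- The single-qubit Hadamard gate `H`. -/
def H1 (ψ : Q1) : Q1 := WithLp.toLp 2 (fun u => (Real.sqrt 2 : ℂ)⁻¹ * ∑ v, sgn (u * v) * ψ v)

/-- The tensor product of two single-qubit vectors. -/
def tens2 (a b : Q1) : Q2 := WithLp.toLp 2 (fun p => a p.1 * b p.2)

/-- The `PX`-magic state `|φ_PX⟩ = (i|0⟩ + |1⟩)/√2`. -/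
def phiPX : Q1 :=
  WithLp.toLp 2 (fun b => if b = 0 then Complex.I / (Real.sqrt 2 : ℂ) else 1 / (Real.sqrt 2 : ℂ))

/-- The `T` gate `diag(1, e^{iπ/4})`. -/
def Tgate (ψ : Q1) : Q1 := WithLp.toLp 2 (fun b => Complex.exp (Complex.I * Real.pi / 4) ^ b.val * ψ b)

/-- The Pauli power `X^c`. -/
def Xpow (c : ZMod 2) (ψ : Q1) : Q1 := WithLp.toLp 2 (fun v => ψ (v + c))

/-- The outcome-`r` orthogonal projection of the XOR measurement `Γ₁`:
`Π₀ = |00⟩⟨00| + |11⟩⟨11|` and `Π₁ = |01⟩⟨01| + |10⟩⟨10|`. -/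
def GammaOneProj (r : ZMod 2) (ψ : Q2) : Q2 :=
  WithLp.toLp 2 (fun p => if p.1 + p.2 = r then ψ p else 0)

/-- The operator `(X Z^{r⊕h}) ⊗ (H|h⟩⟨h|H)`: a Hadamard-basis-outcome-`h` projection
on the second wire together with the correction `Z^{r⊕h}` followed by `X` on the first
wire. -/
def corrTimesHadProj (r h : ZMod 2) (ψ : Q2) : Q2 :=
  WithLp.toLp 2 (fun p => hadKet h p.2 *
    ∑ b : ZMod 2, conj (hadKet h b) * (sgn ((r + h) * (p.1 + 1)) * ψ (p.1 + 1, b)))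

/-!
Both measurements are diagonal in the computational basis of the first wire: outcome `r` of
`Γ₁` pairs first-wire value `a` with second-wire value `a + r`. After the Hadamard projection
and the corrections, the `c`-component of the first wire is therefore `ψ_c` times the scalar
`sgn (r (c + 1 + h)) ω^{c+1} φ_PX(c + 1 + r) / √2`, with `ω = e^{iπ/4}`. Because
`φ_PX(b) = i (−1)^b φ_PX(b + 1)` and `ω² = i`, this scalar is `γ_{r,h} ω^c` with `γ_{r,h}`
independent of `c`, so the first wire carries `γ_{r,h} · Tψ`.
-/

local notation "ω" => Complex.exp (Complex.I * Real.pi / 4)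

lemma zmod_two_eq_zero_or_eq_one (x : ZMod 2) : x = 0 ∨ x = 1 := by
  revert x; decide

lemma sgn_add (x y : ZMod 2) : sgn (x + y) = sgn x * sgn y := by
  rcases zmod_two_eq_zero_or_eq_one x with rfl | rfl <;>
    rcases zmod_two_eq_zero_or_eq_one y with rfl | rfl <;> simp +decide [sgn]

lemma norm_sgn (b : ZMod 2) : ‖sgn b‖ = 1 := by
  unfold sgn; split_ifs <;> simp

lemma conj_hadKet (x b : ZMod 2) : conj (hadKet x b) = hadKet x b := by
  simp [hadKet, sgn, Complex.conj_ofReal, apply_ite]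

lemma sgn_mul_hadKet (r h a : ZMod 2) :
    sgn ((r + h) * a) * hadKet h (a + r) = sgn (r * (a + h)) / (Real.sqrt 2 : ℂ) := by
  rw [hadKet, PiLp.toLp_apply, mul_div_assoc', ← sgn_add]
  congr 2
  linear_combination (h * a) * CharTwo.two_eq_zero (R := ZMod 2)

lemma phiPX_eq_I_mul_sgn_mul (b : ZMod 2) : phiPX b = Complex.I * sgn b * phiPX (b + 1) := by
  rcases zmod_two_eq_zero_or_eq_one b with rfl | rfl <;>
    simp +decide [phiPX, sgn, div_eq_mul_inv, ← mul_assoc]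

lemma norm_phiPX (b : ZMod 2) : ‖phiPX b‖ = 1 / Real.sqrt 2 := by
  rcases zmod_two_eq_zero_or_eq_one b with rfl | rfl <;> simp [phiPX]

lemma omega_sq : ω ^ 2 = Complex.I := by
  rw [← Complex.exp_nat_mul,
    show ((2 : ℕ) : ℂ) * (Complex.I * Real.pi / 4) = (Real.pi / 2 : ℝ) * Complex.I by push_cast; ring]
  simp [Complex.exp_mul_I]

lemma norm_omega : ‖ω‖ = 1 := by
  rw [Complex.norm_exp]; simp

lemma Tgate_Xpow_one_apply_add_one (ψ : Q1) (c : ZMod 2) :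
    Tgate (Xpow 1 ψ) (c + 1) = ω ^ (c + 1).val * ψ c := by
  simp only [Tgate, Xpow, add_assoc, CharTwo.add_self_eq_zero, add_zero]

lemma corrTimesHadProj_GammaOneProj_tens2_apply (r h : ZMod 2) (u v : Q1) (p : ZMod 2 × ZMod 2) :
    corrTimesHadProj r h (GammaOneProj r (tens2 u v)) p =
      hadKet h p.2 * (sgn ((r + h) * (p.1 + 1)) * hadKet h (p.1 + 1 + r) *
        (u (p.1 + 1) * v (p.1 + 1 + r))) := by
  have hsupp (b : ZMod 2) : p.1 + 1 + b = r ↔ b = p.1 + 1 + r := by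
    rw [add_comm _ b, CharTwo.add_eq_iff_eq_add, add_comm]
  simp only [corrTimesHadProj, GammaOneProj, tens2, conj_hadKet, hsupp, mul_ite, mul_zero,
    Finset.sum_ite_eq', Finset.mem_univ, if_true]
  ring

/-- The global phase `γ_{r,h}`, read off from the `|1⟩`-component of the first wire. -/
def branchPhase (r h : ZMod 2) : ℂ := sgn (r * h) * phiPX r / ω / (Real.sqrt 2 : ℂ)

lemma norm_branchPhase (r h : ZMod 2) : ‖branchPhase r h‖ = 1 / 2 := by
  simp [branchPhase, norm_sgn, norm_phiPX, norm_omega, abs_of_nonneg (Real.sqrt_nonneg 2)]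
  rw [div_eq_mul_inv, ← mul_inv, Real.mul_self_sqrt zero_le_two]

lemma sgn_div_sqrt_two_mul_omega_pow_mul_phiPX (r h c : ZMod 2) :
    sgn (r * (c + 1 + h)) / (Real.sqrt 2 : ℂ) * ω ^ (c + 1).val * phiPX (c + 1 + r) =
      branchPhase r h * ω ^ c.val := by
  have hω : ω ≠ 0 := Complex.exp_ne_zero _
  have hval : (1 : ZMod 2).val = 1 := rfl
  rcases zmod_two_eq_zero_or_eq_one c with rfl | rfl
  · rw [branchPhase, phiPX_eq_I_mul_sgn_mul r, zero_add, mul_add, mul_one, sgn_add, add_comm 1 r]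
    field_simp
    rw [hval, ZMod.val_zero]
    linear_combination (sgn r * sgn (r * h) * phiPX (r + 1)) * omega_sq
  · rw [CharTwo.add_self_eq_zero, zero_add, zero_add, ZMod.val_zero, hval, branchPhase]
    field_simp

/-- For every `r, h ∈ {0,1}` there is a complex number `γ_{r,h}` with `|γ_{r,h}| = 1/2`,
independent of `ψ`, such that for every `ψ ∈ ℂ²`:
`((X Z^{r⊕h}) ⊗ (H|h⟩⟨h|H)) ∘ Π_r ((T X ψ) ⊗ φ_PX) = γ_{r,h} · (Tψ) ⊗ (H|h⟩)`. -/
theorem magic_state_T_circuit_gamma_one_branch (r h : ZMod 2) :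
    ∃ γ : ℂ, ‖γ‖ = 1 / 2 ∧
      ∀ ψ : Q1,
        corrTimesHadProj r h (GammaOneProj r (tens2 (Tgate (Xpow 1 ψ)) phiPX))
          = γ • tens2 (Tgate ψ) (hadKet h) := by
  refine ⟨branchPhase r h, norm_branchPhase r h, fun ψ => ?_⟩
  ext ⟨c, b⟩
  rw [corrTimesHadProj_GammaOneProj_tens2_apply, sgn_mul_hadKet, Tgate_Xpow_one_apply_add_one]
  simp only [PiLp.smul_apply, tens2, Tgate, smul_eq_mul]
  linear_combination (ψ c * hadKet h b) * sgn_div_sqrt_two_mul_omega_pow_mul_phiPX r h c
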